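/- Define f(s) = 2 + e^{-3s}(s+1)(1 - s²/2 - s³/3 - s⁴/8) + e^{-2s}(2s + 5s²/2 + s³/2) - e^{-s}(3 + 2s). Then f(s) < 1 for all s in the interval [0, 1.26575]. -/

import Mathlib

/-!
Substituting `x = exp (-s)` turns `f` into a polynomial `fPoly s x`. On each of five subintervals
`[a, b]` of `[0, 1.26575]`, Taylor bounds give `x ∈ [l, u]` with `l ≤ exp (-b)` and
`exp (-a) ≤ u`, and `fPoly < 1` on the box `[a, b] × [l, u]` follows by `linarith` from the listed
products of two box constraints with monomials `s ^ i * x ^ j`. Since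
`f 1.26575 ≈ 1 - 5 · 10⁻⁶`, the last box and the enclosure of `exp (-1.26575)` have to be tight.
-/

open Real Set

noncomputable def fPoly (s x : ℝ) : ℝ :=
  2 + x ^ 3 * (s + 1) * (1 - s ^ 2 / 2 - s ^ 3 / 3 - s ^ 4 / 8)
    + x ^ 2 * (2 * s + 5 * s ^ 2 / 2 + s ^ 3 / 2) - x * (3 + 2 * s)

lemma fPoly_exp_neg (s : ℝ) :
    fPoly s (exp (-s)) = 2 + exp (-3 * s) * (s + 1) * (1 - s ^ 2 / 2 - s ^ 3 / 3 - s ^ 4 / 8)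
      + exp (-2 * s) * (2 * s + 5 * s ^ 2 / 2 + s ^ 3 / 2) - exp (-s) * (3 + 2 * s) := by
  rw [fPoly, ← exp_nat_mul, ← exp_nat_mul]
  push_cast
  ring_nf

def LtOneOnBox (a b l u : ℝ) : Prop :=
  ∀ s ∈ Icc a b, ∀ x ∈ Icc l u, fPoly s x < 1

lemma LtOneOnBox.fPoly_exp_neg_lt_one {a b l u : ℝ} (h : LtOneOnBox a b l u)
    (hl : l ≤ exp (-b)) (hu : exp (-a) ≤ u) {s : ℝ} (hs : s ∈ Icc a b) :
    fPoly s (exp (-s)) < 1 :=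
  h s hs _ ⟨hl.trans (exp_le_exp.2 (neg_le_neg hs.2)), (exp_le_exp.2 (neg_le_neg hs.1)).trans hu⟩

lemma mul_mul_pow_mul_pow_nonneg {s x : ℝ} (hs : 0 ≤ s) (hx : 0 ≤ x) ⦃p q : ℝ⦄ (hp : 0 ≤ p)
    (hq : 0 ≤ q) (i j : ℕ) : 0 ≤ p * q * (s ^ i * x ^ j) :=
  mul_nonneg (mul_nonneg hp hq) (mul_nonneg (pow_nonneg hs i) (pow_nonneg hx j))

lemma ltOneOnBox_0_to_0_5 : LtOneOnBox 0 0.5 0.60653 1 := by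
  rintro s ⟨hsa, hsb⟩ x ⟨hxl, hxu⟩
  have cert := mul_mul_pow_mul_pow_nonneg (s := s) (x := x) (by linarith) (by linarith)
  rw [← sub_nonneg] at hsa hsb hxl hxu
  unfold fPoly
  linarith [cert hsa hsb 0 1, cert hsa hsb 0 2, cert hsa hsb 0 3, cert hsa hsb 1 2,
    cert hsa hxl 0 0, cert hsa hxu 0 1, cert hsa hxu 0 2, cert hsb hsb 0 1, cert hsb hsb 0 3,
    cert hsb hsb 1 3, cert hsb hsb 2 3, cert hsb hsb 3 3, cert hsb hxl 0 0, cert hsb hxu 0 2,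
    cert hxl hxu 0 0]

lemma ltOneOnBox_0_5_to_0_8 : LtOneOnBox 0.5 0.8 0.449328 0.6065307 := by
  rintro s ⟨hsa, hsb⟩ x ⟨hxl, hxu⟩
  have cert := mul_mul_pow_mul_pow_nonneg (s := s) (x := x) (by linarith) (by linarith)
  rw [← sub_nonneg] at hsa hsb hxl hxu
  unfold fPoly
  linarith [cert hsa hsb 0 1, cert hsa hsb 0 2, cert hsa hsb 1 2, cert hsa hxl 0 0,
    cert hsa hxu 0 1, cert hsa hxu 0 2, cert hsb hsb 0 1, cert hsb hsb 0 3, cert hsb hsb 1 3,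
    cert hsb hsb 2 3, cert hsb hsb 3 3, cert hsb hxl 0 0, cert hsb hxu 0 1, cert hsb hxu 0 2,
    cert hxl hxu 0 0]

lemma ltOneOnBox_0_8_to_1 : LtOneOnBox 0.8 1 0.367879 0.449330 := by
  rintro s ⟨hsa, hsb⟩ x ⟨hxl, hxu⟩
  have cert := mul_mul_pow_mul_pow_nonneg (s := s) (x := x) (by linarith) (by linarith)
  rw [← sub_nonneg] at hsa hsb hxl hxu
  unfold fPoly
  linarith [cert hsa hsa 2 3, cert hsa hsa 3 3, cert hsa hsb 0 1, cert hsa hsb 0 2,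
    cert hsa hsb 1 2, cert hsa hxl 0 0, cert hsa hxl 2 2, cert hsa hxu 0 1, cert hsa hxu 0 2,
    cert hsb hsb 0 1, cert hsb hsb 0 3, cert hsb hsb 1 3, cert hsb hxl 0 0, cert hsb hxu 0 1,
    cert hsb hxu 0 2]

lemma ltOneOnBox_1_to_1_2 : LtOneOnBox 1 1.2 0.301194 0.3678795 := by
  rintro s ⟨hsa, hsb⟩ x ⟨hxl, hxu⟩
  have cert := mul_mul_pow_mul_pow_nonneg (s := s) (x := x) (by linarith) (by linarith)
  rw [← sub_nonneg] at hsa hsb hxl hxu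
  unfold fPoly
  linarith [cert hsa hsa 0 0, cert hsa hsa 1 2, cert hsa hsa 1 3, cert hsa hsa 2 2,
    cert hsa hsa 2 3, cert hsa hsa 3 3, cert hsa hsb 0 2, cert hsa hsb 1 0, cert hsa hsb 1 1,
    cert hsa hxl 0 0, cert hsa hxu 0 1, cert hsa hxu 1 1, cert hsb hsb 1 0, cert hsb hxl 0 0,
    cert hsb hxl 1 0, cert hsb hxu 0 2, cert hsb hxu 1 2, cert hsb hxu 3 1, cert hxl hxl 4 1,
    cert hxl hxu 0 0]

lemma ltOneOnBox_1_2_to_1_26575 : LtOneOnBox 1.2 1.26575 0.2820276 0.3011943 := by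
  rintro s ⟨hsa, hsb⟩ x ⟨hxl, hxu⟩
  have cert := mul_mul_pow_mul_pow_nonneg (s := s) (x := x) (by linarith) (by linarith)
  rw [← sub_nonneg] at hsa hsb hxl hxu
  unfold fPoly
  linarith [cert hsa hsb 0 2, cert hsa hsb 0 3, cert hsa hsb 1 2, cert hsa hxl 0 0,
    cert hsa hxu 0 1, cert hsb hsb 0 3, cert hsb hsb 1 3, cert hsb hsb 2 3, cert hsb hsb 3 3,
    cert hsb hxl 0 0, cert hsb hxl 0 1, cert hsb hxu 0 2, cert hxl hxl 0 1, cert hxl hxu 0 0]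

lemma exp_two_mul_mem_Icc_sq {x a b : ℝ} (ha : 0 ≤ a) (h : exp x ∈ Icc a b) :
    exp (2 * x) ∈ Icc (a ^ 2) (b ^ 2) := by
  rw [two_mul, exp_add, ← sq]
  exact ⟨pow_le_pow_left₀ ha h.1 2, pow_le_pow_left₀ (ha.trans h.1) h.2 2⟩

lemma exp_neg_0_5_mem : exp (-0.5) ∈ Icc (0.60653 : ℝ) 0.6065307 := by
  have h := abs_le.mp (Real.exp_bound (x := -0.5) (n := 12) (by norm_num) (by norm_num))
  norm_num [Finset.sum_range_succ, Nat.factorial] at h ⊢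
  constructor <;> linarith [h.1, h.2]

lemma exp_neg_0_8_mem : exp (-0.8) ∈ Icc (0.449328 : ℝ) 0.449330 := by
  have h := abs_le.mp (Real.exp_bound (x := -0.8) (n := 12) (by norm_num) (by norm_num))
  norm_num [Finset.sum_range_succ, Nat.factorial] at h ⊢
  constructor <;> linarith [h.1, h.2]

lemma exp_neg_1_mem : exp (-1) ∈ Icc (0.367879 : ℝ) 0.3678795 := by
  have h := abs_le.mp (Real.exp_bound (x := -1) (n := 12) (by norm_num) (by norm_num))
  norm_num [Finset.sum_range_succ, Nat.factorial] at h ⊢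
  constructor <;> linarith [h.1, h.2]

lemma exp_neg_0_6_mem : exp (-0.6) ∈ Icc (0.5488116360 : ℝ) 0.5488116361 := by
  have h := abs_le.mp (Real.exp_bound (x := -0.6) (n := 12) (by norm_num) (by norm_num))
  norm_num [Finset.sum_range_succ, Nat.factorial] at h ⊢
  constructor <;> linarith [h.1, h.2]

lemma exp_neg_0_632875_mem : exp (-0.632875) ∈ Icc (0.5310627985 : ℝ) 0.5310627986 := by
  have h := abs_le.mp (Real.exp_bound (x := -0.632875) (n := 12) (by norm_num) (by norm_num))
  norm_num [Finset.sum_range_succ, Nat.factorial] at h ⊢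
  constructor <;> linarith [h.1, h.2]

lemma exp_neg_1_2_mem : exp (-1.2) ∈ Icc (0.301194 : ℝ) 0.3011943 := by
  have h := exp_two_mul_mem_Icc_sq (by norm_num) exp_neg_0_6_mem
  norm_num at h ⊢
  constructor <;> linarith [h.1, h.2]

lemma exp_neg_1_26575_mem : exp (-1.26575) ∈ Icc (0.2820276 : ℝ) 0.2820277 := by
  have h := exp_two_mul_mem_Icc_sq (by norm_num) exp_neg_0_632875_mem
  norm_num at h ⊢
  constructor <;> linarith [h.1, h.2]

theorem f_lt_one_on_interval (f : ℝ → ℝ)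
    (hf : ∀ s : ℝ, f s = 2 + Real.exp (-3*s) * (s+1) * (1 - s^2/2 - s^3/3 - s^4/8)
      + Real.exp (-2*s) * (2*s + 5*s^2/2 + s^3/2) - Real.exp (-s) * (3 + 2*s)) :
    ∀ s ∈ Set.Icc (0:ℝ) 1.26575, f s < 1 := by
  rintro s ⟨hs₀, hs₁⟩
  rw [hf, ← fPoly_exp_neg]
  rcases le_or_gt s 0.5 with h₁ | h₁
  · exact ltOneOnBox_0_to_0_5.fPoly_exp_neg_lt_one exp_neg_0_5_mem.1 (by simp) ⟨hs₀, h₁⟩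
  rcases le_or_gt s 0.8 with h₂ | h₂
  · exact ltOneOnBox_0_5_to_0_8.fPoly_exp_neg_lt_one exp_neg_0_8_mem.1 exp_neg_0_5_mem.2
      ⟨h₁.le, h₂⟩
  rcases le_or_gt s 1 with h₃ | h₃
  · exact ltOneOnBox_0_8_to_1.fPoly_exp_neg_lt_one exp_neg_1_mem.1 exp_neg_0_8_mem.2 ⟨h₂.le, h₃⟩
  rcases le_or_gt s 1.2 with h₄ | h₄
  · exact ltOneOnBox_1_to_1_2.fPoly_exp_neg_lt_one exp_neg_1_2_mem.1 exp_neg_1_mem.2 ⟨h₃.le, h₄⟩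
  exact ltOneOnBox_1_2_to_1_26575.fPoly_exp_neg_lt_one exp_neg_1_26575_mem.1 exp_neg_1_2_mem.2
    ⟨h₄.le, hs₁⟩
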